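/- Let G be a finitely generated group and let φ : G → S¹ be a group homomorphism into the circle group. Then φ can be deformed through homomorphisms to a homomorphism with finite image: there exists a family F : ℝ → Hom(G, S¹) of group homomorphisms such that F(0) = φ, the range of F(1) is a finite subset of S¹, and for every g ∈ G the map t ↦ F(t)(g) is continuous. -/

import Mathlib

/-!
A homomorphism `φ : G →* Circle` factors through its image, a finitely generated abelian group,
hence isomorphic to `ℤⁿ × T` with `T` finite. On the free factor the character lifts through
`Circle.exp` to a real character `L` (freeness gives lifting along the surjection `ℝ → S¹`),
which is contracted to the trivial one by `t ↦ exp ((1 - t) • L)`; on `T` the character is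
left unchanged, and its range is finite.
-/

namespace AddMonoidHom

variable {A B : Type*} [AddCommGroup A] [AddCommGroup B]

def DeformsToFiniteRange (χ : A →+ Additive Circle) : Prop :=
  ∃ F : ℝ → (A →+ Additive Circle),
    F 0 = χ ∧ (Set.range (F 1)).Finite ∧ ∀ a, Continuous fun t => F t a

theorem deformsToFiniteRange_of_finite_range {χ : A →+ Additive Circle}
    (hχ : (Set.range χ).Finite) : χ.DeformsToFiniteRange :=
  ⟨fun _ => χ, rfl, hχ, fun _ => continuous_const⟩

theorem DeformsToFiniteRange.add {χ ψ : A →+ Additive Circle} (hχ : χ.DeformsToFiniteRange)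
    (hψ : ψ.DeformsToFiniteRange) : (χ + ψ).DeformsToFiniteRange := by
  obtain ⟨F, hF0, hF1, hF⟩ := hχ
  obtain ⟨G, hG0, hG1, hG⟩ := hψ
  refine ⟨F + G, by rw [Pi.add_apply, hF0, hG0], (hF1.add hG1).subset ?_,
    fun a => (hF a).add (hG a)⟩
  rintro _ ⟨a, rfl⟩
  exact Set.add_mem_add ⟨a, rfl⟩ ⟨a, rfl⟩

theorem DeformsToFiniteRange.comp {χ : A →+ Additive Circle} (hχ : χ.DeformsToFiniteRange)
    (f : B →+ A) : (χ.comp f).DeformsToFiniteRange := by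
  obtain ⟨F, hF0, hF1, hF⟩ := hχ
  refine ⟨fun t => (F t).comp f, congrArg (·.comp f) hF0, hF1.subset ?_, fun b => hF (f b)⟩
  rintro _ ⟨b, rfl⟩
  exact ⟨f b, rfl⟩

theorem deformsToFiniteRange_expHom_comp (L : A →+ ℝ) :
    (Circle.expHom.comp L).DeformsToFiniteRange := by
  refine ⟨fun t => Circle.expHom.comp ((1 - t) • L), by simp only [sub_zero, one_smul], ?_,
    fun a => ?_⟩
  · simp only [sub_self, zero_smul, comp_zero]
    exact (Set.finite_singleton 0).subset (Set.range_subset_iff.2 fun _ => rfl)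
  · simp only [coe_comp, Function.comp_apply, smul_apply, smul_eq_mul, Circle.expHom_apply]
    fun_prop

theorem exists_expHom_comp_eq [Module.Projective ℤ A] (χ : A →+ Additive Circle) :
    ∃ L : A →+ ℝ, Circle.expHom.comp L = χ := by
  obtain ⟨L, hL⟩ := Module.projective_lifting_property Circle.expHom.toIntLinearMap
    χ.toIntLinearMap Circle.exp_surjective
  exact ⟨L.toAddMonoidHom, congrArg LinearMap.toAddMonoidHom hL⟩

theorem deformsToFiniteRange_of_projective [Module.Projective ℤ A] (χ : A →+ Additive Circle) :
    χ.DeformsToFiniteRange := by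
  obtain ⟨L, rfl⟩ := exists_expHom_comp_eq χ
  exact deformsToFiniteRange_expHom_comp L

theorem deformsToFiniteRange_prod [Module.Projective ℤ A] [Finite B]
    (χ : A × B →+ Additive Circle) : χ.DeformsToFiniteRange := by
  rw [← coprod_unique χ, coprod]
  exact ((deformsToFiniteRange_of_projective _).comp _).add
    ((deformsToFiniteRange_of_finite_range (Set.finite_range _)).comp _)

theorem deformsToFiniteRange_of_fg [AddGroup.FG A] (χ : A →+ Additive Circle) :
    χ.DeformsToFiniteRange := by
  obtain ⟨_, ι, _, p, hp, e, ⟨f⟩⟩ := AddCommGroup.equiv_free_prod_directSum_zmod A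
  have : ∀ i, NeZero (p i ^ e i) := fun i => ⟨pow_ne_zero _ (hp i).ne_zero⟩
  have : Finite (DirectSum ι fun i => ZMod (p i ^ e i)) :=
    .of_equiv _ DFinsupp.equivFunOnFintype.symm
  convert (deformsToFiniteRange_prod (χ.comp f.symm.toAddMonoidHom)).comp f.toAddMonoidHom
  ext a
  simp

end AddMonoidHom

/-- Any homomorphism of a finitely generated group to the circle group can be
deformed, through homomorphisms, to a homomorphism with finite image. -/
theorem deform_to_finite_image_hom
    (G : Type*) [Group G] [Group.FG G] (φ : G →* Circle) :
    ∃ F : ℝ → (G →* Circle),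
      F 0 = φ ∧
      (Set.range (F 1)).Finite ∧
      ∀ g : G, Continuous fun t : ℝ => F t g := by
  obtain ⟨F, hF0, hF1, hF⟩ :=
    AddMonoidHom.deformsToFiniteRange_of_fg (MonoidHom.toAdditive φ.range.subtype)
  refine ⟨fun t => (MonoidHom.toAdditive.symm (F t)).comp φ.rangeRestrict, ?_, ?_, ?_⟩
  · ext g
    simp [hF0]
  · refine (hF1.image Additive.toMul).subset ?_
    rintro _ ⟨g, rfl⟩
    exact ⟨_, ⟨_, rfl⟩, rfl⟩
  · exact fun g => continuous_toMul.comp (hF _)
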